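/- Let G = (V,E,s,d) be a task graph in which d_{uv} = d_v = d for some fixed d ∈ (0,1] and all nodes and edges, and for each n let I_n be a set of n homogeneous workers with t_i = t and e_{iv} = e for all i ∈ I_n and v ∈ V. Let s = Σ_{v∈V} s_v and let γ_G = s / max_{v∈V} [ s_v + Σ_{u∈N(v)} s_u ]. Then the work capacity F_{I_n, h(G)} tends to e·t·γ_G/d as n → ∞. -/

import Mathlib

set_option maxHeartbeats 2000000


open Finset Filter

/-- A task graph: a finite weighted directed acyclic graph with node sizes `s`,
within-node interdependencies `dNode`, and edge interdependencies `dEdge`. -/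
structure TaskGraph (V : Type*) [Fintype V] [DecidableEq V] where
  E : Finset (V × V)
  s : V → ℝ
  dNode : V → ℝ
  dEdge : V → V → ℝ
  s_pos : ∀ v, 0 < s v
  dNode_mem : ∀ v, dNode v ∈ Set.Icc (0 : ℝ) 1
  dEdge_mem : ∀ p ∈ E, dEdge p.1 p.2 ∈ Set.Icc (0 : ℝ) 1
  acyclic : ∀ v, ¬ Relation.TransGen (fun u w => (u, w) ∈ E) v v

variable {V : Type*} [Fintype V] [DecidableEq V]

/-- The set `N(v)` of prerequisite nodes of `v`. -/
def TaskGraph.N (G : TaskGraph V) (v : V) : Finset V :=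
  (G.E.filter (fun p => p.2 = v)).image Prod.fst

/-- The amount of work completed on a subtask of size `sv` with internal interdependency `dv`
after the workers in `L` (each a pair of a worker and a time allocation) sequentially
contribute, where `e i` is the expertise of worker `i` on this subtask.  The `k`-th worker
first pays the context cost `c = min(prev * dv / e, r)` for prior work on the subtask and then
contributes `min(e * (r - c), sv - prev)` new units of work. -/
noncomputable def workAfter {I : Type*} (sv dv : ℝ) (e : I → ℝ) (L : List (I × ℝ)) : ℝ :=
  L.foldl (fun prev p =>
    prev + min (e p.1 * (p.2 - min (prev * dv / e p.1) p.2)) (sv - prev)) 0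

/-- An assignment gives, for every node, a finite sequence of workers with time allocations. -/
def Assignment (V I : Type*) := V → List (I × ℝ)

/-- An assignment is `v`-feasible if subtask `v` gets completed. -/
def VFeasible {I : Type*} (G : TaskGraph V) (e : I → V → ℝ) (A : Assignment V I) (v : V) : Prop :=
  workAfter (G.s v) (G.dNode v) (fun i => e i v) (A v) = G.s v

/-- The prerequisite context cost worker `i` pays when assigned to node `v`. -/
noncomputable def prereqCost {I : Type*} (G : TaskGraph V) (e : I → V → ℝ) (i : I) (v : V) : ℝ :=
  ∑ u ∈ G.N v, G.s u * G.dEdge u v / e i u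

/-- The total time worker `i` spends under assignment `A`: their allocations plus the
prerequisite context costs at every node they are assigned to. -/
noncomputable def workerTime {I : Type*} [DecidableEq I] (G : TaskGraph V) (e : I → V → ℝ)
    (A : Assignment V I) (i : I) : ℝ :=
  ∑ v : V, ((((A v).filter (fun p => p.1 = i)).map Prod.snd).sum
    + if i ∈ (A v).map Prod.fst then prereqCost G e i v else 0)

/-- A feasible assignment: nonnegative allocations, every subtask completed, and every
worker's total time within their available time. -/
def Feasible {I : Type*} [DecidableEq I] (G : TaskGraph V) (t : I → ℝ) (e : I → V → ℝ)
    (A : Assignment V I) : Prop :=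
  (∀ v, ∀ p ∈ A v, 0 ≤ p.2) ∧ (∀ v, VFeasible G e A v) ∧ (∀ i, workerTime G e A i ≤ t i)

/-- The task graph obtained by scaling all node sizes by `c > 0` (same interdependency family). -/
def TaskGraph.scale (G : TaskGraph V) (c : ℝ) (hc : 0 < c) : TaskGraph V :=
  { G with s := fun v => c * G.s v, s_pos := fun v => mul_pos hc (G.s_pos v) }

/-- The work capacity of the workers in `S`: the supremum of total task sizes over the
interdependency family of `G` admitting a feasible assignment using only workers in `S`. -/
noncomputable def capacityOn {I : Type*} [DecidableEq I] (G : TaskGraph V) (t : I → ℝ)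
    (e : I → V → ℝ) (S : Set I) : ℝ :=
  sSup {x : ℝ | ∃ (c : ℝ) (hc : 0 < c) (A : Assignment V I),
    Feasible (G.scale c hc) t e A ∧ (∀ v, ∀ p ∈ A v, p.1 ∈ S) ∧ x = ∑ v : V, c * G.s v}

/-- The work capacity `F_{I, h(G)}` of all workers of type `I`. -/
noncomputable def capacity {I : Type*} [DecidableEq I] (G : TaskGraph V) (t : I → ℝ)
    (e : I → V → ℝ) : ℝ :=
  capacityOn G t e Set.univ

/-! ### Auxiliary lemmas -/

section AuxLemmas

variable {V : Type*} [Fintype V] [DecidableEq V]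

lemma fold_upper {I : Type*} (d e T sv : ℝ) (hd0 : 0 ≤ d) (hd1 : d ≤ 1) (he : 0 < e)
    (hT : 0 ≤ T) (hsv : 0 ≤ sv) :
    ∀ (L : List (I × ℝ)) (prev : ℝ), (∀ p ∈ L, 0 ≤ p.2 ∧ p.2 ≤ T) →
      0 ≤ prev → prev ≤ sv → prev * d ≤ e * T →
      (L.foldl (fun prev p =>
        prev + min (e * (p.2 - min (prev * d / e) p.2)) (sv - prev)) prev) ≤ sv ∧
      (L.foldl (fun prev p =>
        prev + min (e * (p.2 - min (prev * d / e) p.2)) (sv - prev)) prev) * d ≤ e * T := by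
  intro L
  induction L with
  | nil => intro prev _ _ h1 h2; exact ⟨h1, h2⟩
  | cons p L ih =>
    intro prev hL h0 h1 h2
    simp only [List.foldl_cons]
    have hp := hL p (by simp)
    set r := p.2 with hr
    set inc := min (e * (r - min (prev * d / e) r)) (sv - prev) with hinc
    have hinc0 : 0 ≤ inc := by
      apply le_min
      · have h : min (prev * d / e) r ≤ r := min_le_right _ _
        nlinarith
      · linarith
    have hincle : inc ≤ sv - prev := min_le_right _ _
    apply ih
    · intro q hq; exact hL q (by simp [hq])
    · linarith
    · linarith
    · rcases le_or_gt (prev * d / e) r with hcase | hcase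
      · have hmin : min (prev * d / e) r = prev * d / e := min_eq_left hcase
        have h3 : prev + inc ≤ prev + e * (r - prev * d / e) := by
          have := min_le_left (e * (r - prev * d / e)) (sv - prev)
          rw [hinc, hmin]; linarith
        have h4 : e * (r - prev * d / e) = e * r - prev * d := by field_simp
        have her : e * r ≤ e * T := by nlinarith [hp.2]
        nlinarith [mul_nonneg h0 hd0, mul_le_mul_of_nonneg_right h2 hd0,
          mul_le_mul_of_nonneg_right her hd0]
      · have hmin : min (prev * d / e) r = r := min_eq_right hcase.le
        have hz : inc = 0 := by
          rw [hinc, hmin]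
          have h5 : e * (r - r) = 0 := by ring
          rw [h5]; exact min_eq_left (by linarith)
        rw [hz]; simpa using h2

lemma workAfter_upper {I : Type*} (d e T sv : ℝ) (hd0 : 0 ≤ d) (hd1 : d ≤ 1) (he : 0 < e)
    (hT : 0 ≤ T) (hsv : 0 ≤ sv) (L : List (I × ℝ)) (hL : ∀ p ∈ L, 0 ≤ p.2 ∧ p.2 ≤ T) :
    workAfter sv d (fun _ => e) L * d ≤ e * T := by
  have h0 : (0 : ℝ) * d ≤ e * T := by
    rw [zero_mul]; exact mul_nonneg he.le hT
  exact (fold_upper d e T sv hd0 hd1 he hT hsv L 0 hL le_rfl hsv h0).2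

lemma fold_exact {I : Type*} (d e sv : ℝ) (he : 0 < e) (hsv : 0 ≤ sv)
    (K : ℕ) (hK : 0 < K) (ι : ℕ → I) :
    ∀ m, m ≤ K → (((List.range m).map
        (fun k => (ι k, ((k : ℝ) * (sv / K)) * d / e + (sv / K) / e))).foldl
      (fun prev p => prev + min (e * (p.2 - min (prev * d / e) p.2)) (sv - prev)) 0)
      = m * (sv / K) := by
  intro m
  induction m with
  | zero => simp
  | succ m ih =>
    intro hm
    rw [List.range_succ, List.map_append, List.foldl_append, ih (by omega)]
    simp only [List.map_cons, List.map_nil, List.foldl_cons, List.foldl_nil]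
    set w := sv / K with hw
    have hw0 : 0 ≤ w := by positivity
    have hKw : sv = K * w := by rw [hw]; field_simp
    have hmin1 : min ((m : ℝ) * w * d / e) ((m : ℝ) * w * d / e + w / e)
        = (m : ℝ) * w * d / e := min_eq_left (le_add_of_nonneg_right (by positivity))
    rw [hmin1]
    have h1 : e * ((m : ℝ) * w * d / e + w / e - (m : ℝ) * w * d / e) = w := by
      field_simp
      ring
    rw [h1]
    have h3 : w ≤ sv - (m : ℝ) * w := by
      have h2 : sv - (m : ℝ) * w = ((K : ℝ) - m) * w := by rw [hKw]; ring
      rw [h2]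
      have : (1 : ℝ) ≤ (K : ℝ) - m := by
        have : (m : ℝ) + 1 ≤ (K : ℝ) := by exact_mod_cast hm
        linarith
      nlinarith
    rw [min_eq_left h3]
    push_cast; ring

lemma workAfter_exact {I : Type*} (d e sv : ℝ) (he : 0 < e) (hsv : 0 ≤ sv)
    (K : ℕ) (hK : 0 < K) (ι : ℕ → I) :
    workAfter sv d (fun _ => e) ((List.range K).map
      (fun k => (ι k, ((k : ℝ) * (sv / K)) * d / e + (sv / K) / e))) = sv := by
  have h := fold_exact d e sv he hsv K hK ι K le_rfl
  have hKne : (K : ℝ) ≠ 0 := Nat.cast_ne_zero.mpr hK.ne'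
  have h2 : (K : ℝ) * (sv / K) = sv := by field_simp
  exact h.trans h2

lemma mem_N_edge (G : TaskGraph V) {u v : V} (h : u ∈ G.N v) : (u, v) ∈ G.E := by
  simp only [TaskGraph.N, Finset.mem_image, Finset.mem_filter] at h
  obtain ⟨p, ⟨hpE, hp2⟩, hp1⟩ := h
  have : p = (u, v) := Prod.ext hp1 hp2
  rwa [this] at hpE

lemma scale_N (G : TaskGraph V) (c : ℝ) (hc : 0 < c) : (G.scale c hc).N = G.N := rfl

lemma prereq_scale (G : TaskGraph V) {d : ℝ}
    (hdEdge : ∀ p ∈ G.E, G.dEdge p.1 p.2 = d) (c : ℝ) (hc : 0 < c)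
    {I : Type*} (e : ℝ) (i : I) (v : V) :
    prereqCost (G.scale c hc) (fun _ _ => e) i v = c * d / e * ∑ u ∈ G.N v, G.s u := by
  unfold prereqCost
  rw [scale_N, Finset.mul_sum]
  apply Finset.sum_congr rfl
  intro u hu
  have hE : (G.scale c hc).dEdge u v = d := hdEdge (u, v) (mem_N_edge G hu)
  show c * G.s u * (G.scale c hc).dEdge u v / e = _
  rw [hE]; ring

lemma sum_terms_single {n : ℕ} (K : ℕ) (j : V × ℕ → Fin n)
    (hj : ∀ v k v' k', k < K → k' < K → j (v, k) = j (v', k') → v = v' ∧ k = k')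
    (R : V → ℕ → ℝ) (P : V → ℝ) (i : Fin n) (v₀ : V) (k₀ : ℕ) (hk₀ : k₀ < K)
    (hi : j (v₀, k₀) = i) :
    (∑ v : V, (((((List.range K).map (fun k => (j (v, k), R v k))).filter
        (fun p => p.1 = i)).map Prod.snd).sum
      + if i ∈ ((List.range K).map (fun k => (j (v, k), R v k))).map Prod.fst
          then P v else 0)) = R v₀ k₀ + P v₀ := by
  rw [Finset.sum_eq_single_of_mem v₀ (Finset.mem_univ v₀)]
  · have h1 : ((((List.range K).map (fun k => (j (v₀, k), R v₀ k))).filter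
        (fun p => p.1 = i)).map Prod.snd) = [R v₀ k₀] := by
      rw [List.filter_map]
      have h1 : (List.range K).filter ((fun p => decide (p.1 = i)) ∘ (fun k => (j (v₀,k), R v₀ k)))
          = (List.range K).filter (fun k => decide (k = k₀)) := by
        apply List.filter_congr
        intro k hk
        simp only [Function.comp, decide_eq_true_eq, decide_eq_decide]
        constructor
        · intro h; exact (hj v₀ k v₀ k₀ (List.mem_range.mp hk) hk₀ (h.trans hi.symm)).2
        · rintro rfl; exact hi
      rw [h1]
      have h2 : (List.range K).filter (fun k => decide (k = k₀)) = [k₀] := by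
        have := List.filter_eq (l := List.range K) k₀
        rw [List.count_eq_one_of_mem (List.nodup_range (n := K)) (List.mem_range.mpr hk₀)] at this
        simpa using this
      rw [h2]; rfl
    rw [h1]
    have h2 : i ∈ ((List.range K).map (fun k => (j (v₀, k), R v₀ k))).map Prod.fst := by
      simp only [List.map_map, List.mem_map, Function.comp]
      exact ⟨k₀, List.mem_range.mpr hk₀, hi⟩
    rw [if_pos h2]
    simp
  · intro v _ hv
    have h1 : ((((List.range K).map (fun k => (j (v, k), R v k))).filter
        (fun p => p.1 = i)).map Prod.snd) = [] := by
      rw [List.filter_map]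
      have : (List.range K).filter ((fun p => decide (p.1 = i)) ∘ (fun k => (j (v,k), R v k))) = [] := by
        rw [List.filter_eq_nil_iff]
        intro k hk
        simp only [Function.comp, decide_eq_true_eq]
        intro h
        exact hv (hj v k v₀ k₀ (List.mem_range.mp hk) hk₀ (h.trans hi.symm)).1
      rw [this]; rfl
    rw [h1]
    have h2 : i ∉ ((List.range K).map (fun k => (j (v, k), R v k))).map Prod.fst := by
      simp only [List.map_map, List.mem_map, Function.comp, not_exists]
      rintro k ⟨hk, hik⟩
      exact hv (hj v k v₀ k₀ (List.mem_range.mp hk) hk₀ (hik.trans hi.symm)).1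
    rw [if_neg h2]
    simp

lemma sum_terms_zero {n : ℕ} (K : ℕ) (j : V × ℕ → Fin n)
    (R : V → ℕ → ℝ) (P : V → ℝ) (i : Fin n)
    (hi : ∀ v k, k < K → j (v, k) ≠ i) :
    (∑ v : V, (((((List.range K).map (fun k => (j (v, k), R v k))).filter
        (fun p => p.1 = i)).map Prod.snd).sum
      + if i ∈ ((List.range K).map (fun k => (j (v, k), R v k))).map Prod.fst
          then P v else 0)) = 0 := by
  apply Finset.sum_eq_zero
  intro v _
  have h1 : ((((List.range K).map (fun k => (j (v, k), R v k))).filter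
      (fun p => p.1 = i)).map Prod.snd) = [] := by
    rw [List.filter_map]
    have : (List.range K).filter ((fun p => decide (p.1 = i)) ∘ (fun k => (j (v,k), R v k))) = [] := by
      rw [List.filter_eq_nil_iff]
      intro k hk
      simp only [Function.comp, decide_eq_true_eq]
      exact hi v k (List.mem_range.mp hk)
    rw [this]; rfl
  rw [h1]
  have h2 : i ∉ ((List.range K).map (fun k => (j (v, k), R v k))).map Prod.fst := by
    simp only [List.map_map, List.mem_map, Function.comp, not_exists]
    rintro k ⟨hk, hik⟩
    exact hi v k (List.mem_range.mp hk) hik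
  rw [if_neg h2]
  simp

lemma alloc_extract {I : Type*} [DecidableEq I]
    (A : V → List (I × ℝ)) (P : I → V → ℝ) (hP : ∀ i v, 0 ≤ P i v)
    (hpos : ∀ v, ∀ p ∈ A v, 0 ≤ p.2) (t : ℝ) (i : I)
    (hwt : (∑ v : V, ((((A v).filter (fun p => p.1 = i)).map Prod.snd).sum
      + if i ∈ (A v).map Prod.fst then P i v else 0)) ≤ t)
    (v : V) (r : ℝ) (hmem : (i, r) ∈ A v) : r + P i v ≤ t := by
  have hterm : ∀ v' : V, 0 ≤ ((((A v').filter (fun p => p.1 = i)).map Prod.snd).sum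
      + if i ∈ (A v').map Prod.fst then P i v' else 0) := by
    intro v'
    have h1 : 0 ≤ (((A v').filter (fun p => p.1 = i)).map Prod.snd).sum := by
      apply List.sum_nonneg
      intro x hx
      simp only [List.mem_map, List.mem_filter] at hx
      obtain ⟨p, ⟨hp, _⟩, rfl⟩ := hx
      exact hpos v' p hp
    have h2 : 0 ≤ (if i ∈ (A v').map Prod.fst then P i v' else 0) := by
      split <;> simp [hP]
    linarith
  have hsingle := Finset.single_le_sum (fun v' _ => hterm v') (Finset.mem_univ v)
  have hv : r + P i v ≤ ((((A v).filter (fun p => p.1 = i)).map Prod.snd).sum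
      + if i ∈ (A v).map Prod.fst then P i v else 0) := by
    have hmemf : (i, r) ∈ (A v).filter (fun p => p.1 = i) := by
      rw [List.mem_filter]
      exact ⟨hmem, by simp⟩
    have hr : r ∈ ((A v).filter (fun p => p.1 = i)).map Prod.snd :=
      List.mem_map.mpr ⟨(i, r), hmemf, rfl⟩
    have h1 : r ≤ (((A v).filter (fun p => p.1 = i)).map Prod.snd).sum := by
      apply List.single_le_sum _ _ hr
      intro x hx
      simp only [List.mem_map, List.mem_filter] at hx
      obtain ⟨p, ⟨hp, _⟩, rfl⟩ := hx
      exact hpos v p hp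
    have h2 : (if i ∈ (A v).map Prod.fst then P i v else 0) = P i v := by
      rw [if_pos]
      exact List.mem_map.mpr ⟨(i, r), hmem, rfl⟩
    linarith
  linarith [le_trans hv hsingle]

end AuxLemmas
/-- Theorem: limits of feasible work with infinite workers, uniform
interdependencies.  If `d_{uv} = d_v = d ∈ (0,1]` everywhere and all workers are homogeneous
with time `t` and expertise `e` on every node, then the work capacity `F_{I_n, h(G)}` tends to
`e * t * γ_G / d` as `n → ∞`, where `γ_G = s / max_v [s_v + Σ_{u ∈ N(v)} s_u]`. -/
theorem capacity_tendsto_uniform_interdependency [Nonempty V] (G : TaskGraph V)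
    (d : ℝ) (hd : 0 < d) (hd1 : d ≤ 1)
    (hdNode : ∀ v, G.dNode v = d) (hdEdge : ∀ p ∈ G.E, G.dEdge p.1 p.2 = d)
    (t : ℝ) (ht : 0 < t) (e : ℝ) (he : 0 < e) (γ : ℝ)
    (hγ : γ = (∑ v : V, G.s v) / Finset.univ.sup' Finset.univ_nonempty
      (fun v => G.s v + ∑ u ∈ G.N v, G.s u)) :
    Tendsto (fun n : ℕ => capacity (I := Fin n) G (fun _ => t) (fun _ _ => e))
      atTop (nhds (e * t * γ / d)) := by
  classical
  set M := Finset.univ.sup' Finset.univ_nonempty (fun v => G.s v + ∑ u ∈ G.N v, G.s u)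
    with hM_def
  set S := ∑ v : V, G.s v with hS_def
  have hS : 0 < S := Finset.sum_pos (fun v _ => G.s_pos v) Finset.univ_nonempty
  have hNn : ∀ v, 0 ≤ ∑ u ∈ G.N v, G.s u := fun v => Finset.sum_nonneg fun u _ => (G.s_pos u).le
  have hMv : ∀ v : V, G.s v + ∑ u ∈ G.N v, G.s u ≤ M := by
    intro v; rw [hM_def]
    exact Finset.le_sup' (fun v => G.s v + ∑ u ∈ G.N v, G.s u) (Finset.mem_univ v)
  obtain ⟨v₁⟩ := ‹Nonempty V›
  have hM : 0 < M := lt_of_lt_of_le (by nlinarith [G.s_pos v₁, hNn v₁]) (hMv v₁)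
  have hγpos : 0 < γ := by rw [hγ]; exact div_pos hS hM
  set L0 := e * t * γ / d with hL0def
  have hL0pos : 0 < L0 := by
    rw [hL0def]; exact div_pos (mul_pos (mul_pos he ht) hγpos) hd
  have hL0eq : L0 * (d * M) = e * t * S := by
    rw [hL0def, hγ]; field_simp
  set capSet : ℕ → Set ℝ := fun n => {x : ℝ | ∃ (c : ℝ) (hc : 0 < c) (A : Assignment V (Fin n)),
    Feasible (G.scale c hc) (fun _ => t) (fun _ _ => e) A ∧
    (∀ v, ∀ p ∈ A v, p.1 ∈ (Set.univ : Set (Fin n))) ∧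
    x = ∑ v : V, c * G.s v} with hcapSet
  have hcap : ∀ n : ℕ, capacity (I := Fin n) G (fun _ => t) (fun _ _ => e) = sSup (capSet n) := by
    intro n
    simp only [hcapSet]
    rfl
  -- upper bound
  have key_ub : ∀ (n : ℕ) (c : ℝ) (hc : 0 < c) (A : Assignment V (Fin n)),
      Feasible (G.scale c hc) (fun _ => t) (fun _ _ => e) A → c * (d * M) ≤ e * t := by
    intro n c hc A hA
    have halloc : ∀ v (i : Fin n) r, (i, r) ∈ A v →
        r + c * d / e * ∑ u ∈ G.N v, G.s u ≤ t := by
      intro v i r hm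
      have hP : ∀ (i : Fin n) v, 0 ≤ prereqCost (G.scale c hc) (fun _ _ => e) i v := by
        intro i v
        rw [prereq_scale G hdEdge c hc e i v]
        exact mul_nonneg (by positivity) (hNn v)
      have hwt : (∑ v : V, ((((A v).filter (fun p => p.1 = i)).map Prod.snd).sum
          + if i ∈ (A v).map Prod.fst
              then prereqCost (G.scale c hc) (fun _ _ => e) i v else 0)) ≤ t :=
        hA.2.2 i
      have h := alloc_extract A (fun i v => prereqCost (G.scale c hc) (fun _ _ => e) i v)
        hP hA.1 t i hwt v r hm
      have h' : r + prereqCost (G.scale c hc) (fun _ _ => e) i v ≤ t := h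
      rwa [prereq_scale G hdEdge c hc e i v] at h'

    have hv : ∀ v : V, c * d * (G.s v + ∑ u ∈ G.N v, G.s u) ≤ e * t := by
      intro v
      set T := t - c * d / e * ∑ u ∈ G.N v, G.s u with hT
      have hvf : workAfter (c * G.s v) d (fun _ : Fin n => e) (A v) = c * G.s v := by
        have h1 := hA.2.1 v
        unfold VFeasible at h1
        have h2 : (G.scale c hc).dNode v = d := hdNode v
        rw [h2] at h1
        exact h1
      have hab : ∀ p ∈ A v, 0 ≤ p.2 ∧ p.2 ≤ T := by
        intro p hp
        refine ⟨hA.1 v p hp, ?_⟩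
        have h := halloc v p.1 p.2 (by rw [Prod.mk.eta]; exact hp)
        rw [hT]; linarith
      have hne : A v ≠ [] := by
        intro hnil
        rw [hnil] at hvf
        unfold workAfter at hvf
        simp only [List.foldl_nil] at hvf
        nlinarith [mul_pos hc (G.s_pos v)]
      obtain ⟨p0, hp0⟩ := List.exists_mem_of_ne_nil _ hne
      have hT0 : 0 ≤ T := le_trans (hab p0 hp0).1 (hab p0 hp0).2
      have hup := workAfter_upper d e T (c * G.s v) hd.le hd1 he hT0
        (mul_pos hc (G.s_pos v)).le (A v) hab
      rw [hvf] at hup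
      have hTe : e * T = e * t - c * d * ∑ u ∈ G.N v, G.s u := by
        rw [hT]; field_simp
      rw [hTe] at hup
      nlinarith [hup]
    have hM_le : M ≤ e * t / (c * d) := by
      rw [hM_def]
      apply Finset.sup'_le
      intro v _
      rw [le_div_iff₀ (mul_pos hc hd)]
      nlinarith [hv v]
    have h2 : c * d * M ≤ c * d * (e * t / (c * d)) :=
      mul_le_mul_of_nonneg_left hM_le (mul_pos hc hd).le
    have h3 : c * d * (e * t / (c * d)) = e * t := by field_simp
    nlinarith [h2, h3]
  have set_ub : ∀ n : ℕ, ∀ x ∈ capSet n, x ≤ L0 := by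
    intro n x hx
    simp only [hcapSet, Set.mem_setOf_eq] at hx
    obtain ⟨c, hc, A, hA, -, rfl⟩ := hx
    have h1 := key_ub n c hc A hA
    have h2 : ∑ v : V, c * G.s v = c * S := by rw [hS_def, Finset.mul_sum]
    rw [h2]
    nlinarith [hL0eq, mul_pos hd hM, mul_le_mul_of_nonneg_right h1 hS.le]
  -- lower bound
  have key_lb : ∀ ε : ℝ, 0 < ε → ∃ N : ℕ, ∀ n, N ≤ n → ∃ x ∈ capSet n, L0 - ε ≤ x := by
    intro ε hε
    set m := min ε (L0 / 2) with hm_def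
    have hm0 : 0 < m := lt_min hε (by linarith)
    have hmL : m ≤ L0 / 2 := min_le_right _ _
    have hmε : m ≤ ε := min_le_left _ _
    set c₀ := (L0 - m) / S with hc₀_def
    have hc₀ : 0 < c₀ := div_pos (by linarith) hS
    set δ := m * t / L0 with hδ_def
    have hδ0 : 0 < δ := div_pos (mul_pos hm0 ht) hL0pos
    have hslack : ∀ v : V, c₀ * d / e * (G.s v + ∑ u ∈ G.N v, G.s u) + δ ≤ t := by
      intro v
      have h1 : c₀ * d / e * (G.s v + ∑ u ∈ G.N v, G.s u) ≤ c₀ * d / e * M :=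
        mul_le_mul_of_nonneg_left (hMv v) (by positivity)
      have hdM : d * M = e * t * S / L0 := by
        rw [eq_div_iff hL0pos.ne']
        linear_combination hL0eq
      have h2 : c₀ * d / e * M = t - δ := by
        calc c₀ * d / e * M = c₀ * (d * M) / e := by ring
          _ = ((L0 - m) / S) * (e * t * S / L0) / e := by rw [hdM, hc₀_def]
          _ = t - m * t / L0 := by field_simp
          _ = t - δ := by rw [hδ_def]
      linarith
    set Smax := Finset.univ.sup' Finset.univ_nonempty G.s with hSmax_def
    have hSmaxv : ∀ v, G.s v ≤ Smax := by
      intro v; rw [hSmax_def]; exact Finset.le_sup' G.s (Finset.mem_univ v)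
    set K := ⌈(c₀ * Smax) / (e * δ)⌉₊ + 1 with hK_def
    have hK0 : 0 < K := Nat.succ_pos _
    have hKpos : (0 : ℝ) < K := by exact_mod_cast hK0
    have hKge : (c₀ * Smax) / (e * δ) ≤ (K : ℝ) := by
      rw [hK_def]
      push_cast
      linarith [Nat.le_ceil ((c₀ * Smax) / (e * δ))]
    have hchunk : ∀ v : V, c₀ * G.s v / K ≤ e * δ := by
      intro v
      rw [div_le_iff₀ hKpos]
      rw [div_le_iff₀ (by positivity)] at hKge
      have h2 : c₀ * G.s v ≤ c₀ * Smax := mul_le_mul_of_nonneg_left (hSmaxv v) hc₀.le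
      nlinarith
    refine ⟨Fintype.card V * K, fun n hn => ?_⟩
    have hcard : Fintype.card (V × Fin K) ≤ Fintype.card (Fin n) := by
      simpa using hn
    obtain ⟨ι⟩ := Function.Embedding.nonempty_of_card_le hcard
    set j : V × ℕ → Fin n := fun x => ι (x.1, ⟨x.2 % K, Nat.mod_lt _ hK0⟩) with hj_def
    have hj : ∀ v k v' k', k < K → k' < K → j (v, k) = j (v', k') → v = v' ∧ k = k' := by
      intro v k v' k' hk hk' hh
      simp only [hj_def] at hh
      have h2 := ι.injective hh
      rw [Prod.ext_iff] at h2
      refine ⟨h2.1, ?_⟩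
      have h3 : k % K = k' % K := congrArg Fin.val h2.2
      rwa [Nat.mod_eq_of_lt hk, Nat.mod_eq_of_lt hk'] at h3
    set R : V → ℕ → ℝ := fun v k =>
      ((k : ℝ) * ((c₀ * G.s v) / K)) * d / e + ((c₀ * G.s v) / K) / e with hR_def
    set A : Assignment V (Fin n) := fun v =>
      (List.range K).map (fun k => (j (v, k), R v k)) with hA_def
    have hpos : ∀ v, ∀ p ∈ A v, 0 ≤ p.2 := by
      intro v p hp
      simp only [hA_def, List.mem_map, List.mem_range] at hp
      obtain ⟨k, hk, rfl⟩ := hp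
      simp only [hR_def]
      have hx : (0:ℝ) ≤ (c₀ * G.s v) / K := (div_pos (mul_pos hc₀ (G.s_pos v)) hKpos).le
      have h1 : (0:ℝ) ≤ ((k : ℝ) * ((c₀ * G.s v) / K)) * d / e :=
        div_nonneg (mul_nonneg (mul_nonneg (Nat.cast_nonneg k) hx) hd.le) he.le
      have h2 : (0:ℝ) ≤ ((c₀ * G.s v) / K) / e := div_nonneg hx he.le
      linarith
    have hvfeas : ∀ v, VFeasible (G.scale c₀ hc₀) (fun _ _ => e) A v := by
      intro v
      unfold VFeasible
      have h1 : (G.scale c₀ hc₀).dNode v = d := hdNode v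
      rw [h1]
      simp only [hA_def, hR_def]
      exact workAfter_exact d e (c₀ * G.s v) he
        (mul_pos hc₀ (G.s_pos v)).le K hK0 (fun k => j (v, k))
    have hwt : ∀ i : Fin n, workerTime (G.scale c₀ hc₀) (fun _ _ => e) A i ≤ t := by
      intro i
      by_cases hex : ∃ v k, k < K ∧ j (v, k) = i
      · obtain ⟨v₀, k₀, hk₀, hik⟩ := hex
        have hsum := sum_terms_single K j hj R
          (fun v => prereqCost (G.scale c₀ hc₀) (fun _ _ => e) i v) i v₀ k₀ hk₀ hik
        have heq : workerTime (G.scale c₀ hc₀) (fun _ _ => e) A i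
            = R v₀ k₀ + prereqCost (G.scale c₀ hc₀) (fun _ _ => e) i v₀ := by
          unfold workerTime
          simp only [hA_def]
          exact hsum
        rw [heq, prereq_scale G hdEdge c₀ hc₀ e i v₀]
        simp only [hR_def]
        have hwle : (c₀ * G.s v₀) / K ≤ e * δ := hchunk v₀
        have hk₀le : (k₀ : ℝ) * ((c₀ * G.s v₀) / K) ≤ c₀ * G.s v₀ := by
          have h1 : (k₀ : ℝ) ≤ K := by exact_mod_cast hk₀.le
          have h2 : (0:ℝ) ≤ (c₀ * G.s v₀) / K := (div_pos (mul_pos hc₀ (G.s_pos v₀)) hKpos).le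
          have h3 : (K : ℝ) * ((c₀ * G.s v₀) / K) = c₀ * G.s v₀ := by field_simp
          nlinarith
        have hb1 : ((k₀ : ℝ) * ((c₀ * G.s v₀) / K)) * d / e ≤ (c₀ * G.s v₀) * d / e := by
          gcongr
        have hb2 : ((c₀ * G.s v₀) / K) / e ≤ δ := by
          rw [div_le_iff₀ he]
          nlinarith
        have hs := hslack v₀
        have hring : c₀ * d / e * (G.s v₀ + ∑ u ∈ G.N v₀, G.s u)
            = (c₀ * G.s v₀) * d / e + c₀ * d / e * ∑ u ∈ G.N v₀, G.s u := by ring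
        linarith [hb1, hb2, hs, hring.symm.le]
      · push_neg at hex
        have hsum := sum_terms_zero K j R
          (fun v => prereqCost (G.scale c₀ hc₀) (fun _ _ => e) i v) i
          (fun v k hk => hex v k hk)
        have heq : workerTime (G.scale c₀ hc₀) (fun _ _ => e) A i = 0 := by
          unfold workerTime
          simp only [hA_def]
          exact hsum
        rw [heq]; exact ht.le
    refine ⟨∑ v : V, c₀ * G.s v, ?_, ?_⟩
    · simp only [hcapSet, Set.mem_setOf_eq]
      exact ⟨c₀, hc₀, A, ⟨hpos, hvfeas, fun i => hwt i⟩, fun v p _ => Set.mem_univ _, rfl⟩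
    · rw [← Finset.mul_sum, ← hS_def, hc₀_def]
      have h1 : (L0 - m) / S * S = L0 - m := by field_simp
      linarith
  -- assemble
  rw [Metric.tendsto_atTop]
  intro ε hε
  obtain ⟨N, hN⟩ := key_lb (ε / 2) (by linarith)
  refine ⟨N, fun n hn => ?_⟩
  obtain ⟨x, hx, hxge⟩ := hN n hn
  have hbdd : BddAbove (capSet n) := ⟨L0, fun y hy => set_ub n y hy⟩
  have hub : capacity (I := Fin n) G (fun _ => t) (fun _ _ => e) ≤ L0 := by
    rw [hcap n]
    exact csSup_le ⟨x, hx⟩ (set_ub n)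
  have hlb : L0 - ε / 2 ≤ capacity (I := Fin n) G (fun _ => t) (fun _ _ => e) := by
    rw [hcap n]
    exact le_trans hxge (le_csSup hbdd hx)
  rw [Real.dist_eq, abs_lt]
  constructor <;> linarith
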